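/- Let n ≥ 2, let N be a positive divisor of n, let φ be a finite-order automorphism of the one-sided shift on (Fin n)^ℕ, and let (A, Φ) be a support of φ. Then every point of (Fin n)^ℕ has orbit length exactly N under φ if and only if every based circuit of A has orbit length exactly N under Φ. -/

import Mathlib

/-- The one-sided shift map on `(Fin n)^ℕ`: `(σ x) i = x (i+1)`. -/
def shiftMap (n : ℕ) : (ℕ → Fin n) → (ℕ → Fin n) := fun x i => x (i + 1)

/-- `b` has orbit length exactly `N` under `f`: `N` is the least `L ≥ 1` with `f^[L] b = b`. -/
def HasOrbitLen {β : Type*} (f : β → β) (b : β) (N : ℕ) : Prop :=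
  IsLeast {L : ℕ | 0 < L ∧ f^[L] b = b} N

/-- An automorphism of the one-sided shift: a homeomorphism commuting with the shift. -/
def IsShiftAut (n : ℕ) (φ : (ℕ → Fin n) ≃ₜ (ℕ → Fin n)) : Prop :=
  ⇑φ ∘ shiftMap n = shiftMap n ∘ ⇑φ

/-- `φ` has finite order. -/
def FiniteOrderAut (n : ℕ) (φ : (ℕ → Fin n) ≃ₜ (ℕ → Fin n)) : Prop :=
  ∃ m : ℕ, 0 < m ∧ (⇑φ)^[m] = id

/-- Extension of the transition function of an automaton to words (letters read in order). -/
def transStar {n : ℕ} {Q : Type*} (π : Fin n → Q → Q) : List (Fin n) → Q → Q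
  | [], q => q
  | x :: w, q => transStar π w (π x q)

/-- The automaton `(Q, π)` is synchronizing at level `k` with synchronizing map `s`. -/
def SyncAtLevelWith {n : ℕ} {Q : Type*} (π : Fin n → Q → Q) (k : ℕ)
    (s : List (Fin n) → Q) : Prop :=
  ∀ w : List (Fin n), w.length = k → ∀ q : Q, transStar π w q = s w

/-- The synchronizing map `s` at level `k` is surjective (the automaton is core). -/
def CoreAt {n : ℕ} {Q : Type*} (s : List (Fin n) → Q) (k : ℕ) : Prop :=
  ∀ q : Q, ∃ w : List (Fin n), w.length = k ∧ s w = q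

/-- An automorphism of the underlying digraph of the automaton `(Q, π)`. -/
structure DigraphAut {Q : Type*} (n : ℕ) (π : Fin n → Q → Q) where
  α : Q ≃ Q
  lab : Q → Equiv.Perm (Fin n)
  compat : ∀ (x : Fin n) (q : Q), π (lab q x) (α q) = α (π x q)

/-- Action of a digraph automorphism on the edge set `Q × Fin n`. -/
def edgeMap {Q : Type*} {n : ℕ} {π : Fin n → Q → Q} (Φ : DigraphAut n π) :
    Q × Fin n → Q × Fin n :=
  fun e => (Φ.α e.1, Φ.lab e.1 e.2)

/-- The output word map `Λ` of a digraph automorphism. -/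
def outWord {Q : Type*} {n : ℕ} (π : Fin n → Q → Q) (lab : Q → Equiv.Perm (Fin n)) :
    List (Fin n) → Q → List (Fin n)
  | [], _ => []
  | x :: w, q => lab q x :: outWord π lab w (π x q)

/-- Action of a digraph automorphism on based circuits: `(q, w) ↦ (α q, Λ(w, q))`. -/
def circMap {Q : Type*} {n : ℕ} {π : Fin n → Q → Q} (Φ : DigraphAut n π) :
    Q × List (Fin n) → Q × List (Fin n) :=
  fun c => (Φ.α c.1, outWord π Φ.lab c.2 c.1)

/-- `(q, w)` is a based circuit: `w` nonempty and `π*(w, q) = q`. -/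
def IsBasedCircuit {Q : Type*} {n : ℕ} (π : Fin n → Q → Q) (c : Q × List (Fin n)) : Prop :=
  c.2 ≠ [] ∧ transStar π c.2 c.1 = c.1

/-- The sliding block code induced by an automaton synchronizing at level `k`
with synchronizing map `s` and digraph automorphism with labelling `lab`:
`(F x) i = lab q_i (x i)` where `q_i = s [x(i+k), x(i+k-1), …, x(i+1)]`. -/
def inducedMap {Q : Type*} {n : ℕ} (k : ℕ) (s : List (Fin n) → Q)
    (lab : Q → Equiv.Perm (Fin n)) : (ℕ → Fin n) → (ℕ → Fin n) :=
  fun x i => lab (s (List.ofFn fun j : Fin k => x (i + k - (j : ℕ)))) (x i)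

/-- `(A, Φ)` (with `A` synchronizing and core) is a support of the shift automorphism `φ`. -/
def IsSupport {Q : Type*} (n : ℕ) (π : Fin n → Q → Q) (Φ : DigraphAut n π)
    (φ : (ℕ → Fin n) ≃ₜ (ℕ → Fin n)) : Prop :=
  ∃ (k : ℕ) (s : List (Fin n) → Q), SyncAtLevelWith π k s ∧ CoreAt s k ∧
    inducedMap k s Φ.lab = ⇑φ

/-- The permutation automorphism of the shift induced by a permutation of `Fin n`. -/
def permAutMap {n : ℕ} (ρ : Equiv.Perm (Fin n)) : (ℕ → Fin n) → (ℕ → Fin n) :=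
  fun x i => ρ (x i)

/-- `t` is heavy for `(A, Φ, N)` with divisibility constant `b`. -/
def Heavy {Q : Type*} {n : ℕ} (π : Fin n → Q → Q) (Φ : DigraphAut n π)
    (N b : ℕ) (t : Q) : Prop :=
  b ∣ N ∧ b ≠ N ∧ (∀ r : ℕ, HasOrbitLen (⇑Φ.α) t r → r ∣ b) ∧
  ∀ (q : Q) (x : Fin n), π x q = t →
    ∀ L : ℕ, HasOrbitLen (edgeMap Φ) (q, x) L → Nat.lcm L b = N


/-! ### Auxiliary development -/

section Aux

variable {n : ℕ} {Q : Type*}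

theorem transStar_append (π : Fin n → Q → Q) (u v : List (Fin n)) (q : Q) :
    transStar π (u ++ v) q = transStar π v (transStar π u q) := by
  induction u generalizing q with
  | nil => rfl
  | cons x u ih => simp [transStar, ih]

theorem outWord_length (π : Fin n → Q → Q) (lab : Q → Equiv.Perm (Fin n)) :
    ∀ (w : List (Fin n)) (q : Q), (outWord π lab w q).length = w.length
  | [], _ => rfl
  | x :: w, q => by simp [outWord, outWord_length π lab w]

theorem transStar_outWord (π : Fin n → Q → Q) (Φ : DigraphAut n π) :
    ∀ (w : List (Fin n)) (q : Q),
      transStar π (outWord π Φ.lab w q) (Φ.α q) = Φ.α (transStar π w q)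
  | [], q => rfl
  | x :: w, q => by
      show transStar π (outWord π Φ.lab w (π x q)) (π (Φ.lab q x) (Φ.α q)) = _
      rw [Φ.compat, transStar_outWord π Φ w (π x q)]
      rfl

/-- Cyclic reading of a word. -/
def cyc [NeZero n] (w : List (Fin n)) (j : ℕ) : Fin n := w.getD (j % w.length) default

theorem cyc_congr [NeZero n] (w : List (Fin n)) {i j : ℕ}
    (h : i % w.length = j % w.length) : cyc w i = cyc w j := by
  simp [cyc, h]

theorem cyc_eq_get [NeZero n] (w : List (Fin n)) {j : ℕ} (h : j < w.length) :
    cyc w j = w[j] := by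
  unfold cyc
  rw [Nat.mod_eq_of_lt h, List.getD_eq_getElem _ _ h]

/-- The state sequence along a cyclic reading of `w` starting at `q`. -/
def Qst [NeZero n] (π : Fin n → Q → Q) (w : List (Fin n)) (q : Q) : ℕ → Q
  | 0 => q
  | j + 1 => π (cyc w j) (Qst π w q j)

theorem transStar_ofFn_cyc [NeZero n] (π : Fin n → Q → Q) (w : List (Fin n)) (q : Q) :
    ∀ (m j : ℕ), transStar π (List.ofFn fun a : Fin m => cyc w (j + ↑a)) (Qst π w q j)
      = Qst π w q (j + m) := by
  intro m
  induction m with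
  | zero => intro j; rfl
  | succ m ih =>
    intro j
    rw [List.ofFn_succ]
    simp only [Fin.val_zero, Fin.val_succ, Nat.add_zero]
    show transStar π _ (π (cyc w j) (Qst π w q j)) = _
    have h0 : π (cyc w j) (Qst π w q j) = Qst π w q (j + 1) := rfl
    rw [h0]
    have h2 : (List.ofFn fun a : Fin m => cyc w (j + (↑a + 1)))
        = List.ofFn fun a : Fin m => cyc w ((j + 1) + ↑a) := by
      refine congrArg _ (funext fun a => ?_)
      rw [show j + (↑a + 1) = (j + 1) + ↑a by omega]
    rw [h2, ih (j + 1)]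
    congr 1
    omega

theorem outWord_ofFn_cyc [NeZero n] (π : Fin n → Q → Q) (lab : Q → Equiv.Perm (Fin n))
    (w : List (Fin n)) (q : Q) :
    ∀ (m j : ℕ), outWord π lab (List.ofFn fun a : Fin m => cyc w (j + ↑a)) (Qst π w q j)
      = List.ofFn fun a : Fin m => lab (Qst π w q (j + ↑a)) (cyc w (j + ↑a)) := by
  intro m
  induction m with
  | zero => intro j; rfl
  | succ m ih =>
    intro j
    rw [List.ofFn_succ, List.ofFn_succ]
    simp only [Fin.val_zero, Fin.val_succ, Nat.add_zero]
    show lab (Qst π w q j) (cyc w j) ::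
        outWord π lab _ (π (cyc w j) (Qst π w q j)) = _
    have h0 : π (cyc w j) (Qst π w q j) = Qst π w q (j + 1) := rfl
    rw [h0]
    have h2 : (List.ofFn fun a : Fin m => cyc w (j + (↑a + 1)))
        = List.ofFn fun a : Fin m => cyc w ((j + 1) + ↑a) := by
      refine congrArg _ (funext fun a => ?_)
      rw [show j + (↑a + 1) = (j + 1) + ↑a by omega]
    rw [h2, ih (j + 1)]
    refine congrArg _ (congrArg _ (funext fun a => ?_))
    rw [show (j + 1) + ↑a = j + (↑a + 1) by omega]

theorem eq_ofFn_cyc [NeZero n] (w : List (Fin n)) :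
    w = List.ofFn fun a : Fin w.length => cyc w ↑a := by
  conv_lhs => rw [← (List.ofFn_getElem : List.ofFn (fun i : Fin w.length => w[(i : ℕ)]) = w)]
  congr 1
  funext a
  rw [cyc_eq_get w a.isLt]

theorem Qst_length [NeZero n] (π : Fin n → Q → Q) (w : List (Fin n)) (q : Q) :
    Qst π w q w.length = transStar π w q := by
  have h := transStar_ofFn_cyc π w q w.length 0
  simp only [Nat.zero_add] at h
  rw [← eq_ofFn_cyc w] at h
  exact h.symm

theorem Qst_add_length [NeZero n] (π : Fin n → Q → Q) (w : List (Fin n)) {q : Q}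
    (hq : transStar π w q = q) : ∀ j, Qst π w q (j + w.length) = Qst π w q j := by
  intro j
  induction j with
  | zero => rw [Nat.zero_add, Qst_length, hq]; rfl
  | succ j ih =>
    have e : j + 1 + w.length = (j + w.length) + 1 := by omega
    rw [e]
    show π (cyc w (j + w.length)) (Qst π w q (j + w.length)) = _
    rw [ih, cyc_congr w (i := j + w.length) (j := j) (by rw [Nat.add_mod_right])]
    rfl

theorem Qst_add_mul [NeZero n] (π : Fin n → Q → Q) (w : List (Fin n)) {q : Q}
    (hq : transStar π w q = q) : ∀ (m j : ℕ), Qst π w q (j + m * w.length) = Qst π w q j := by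
  intro m
  induction m with
  | zero => intro j; rw [Nat.zero_mul, Nat.add_zero]
  | succ m ih =>
    intro j
    have e : j + (m + 1) * w.length = (j + m * w.length) + w.length := by ring
    rw [e, Qst_add_length π w hq, ih]

theorem Qst_congr [NeZero n] (π : Fin n → Q → Q) (w : List (Fin n)) {q : Q}
    (hq : transStar π w q = q) {i j : ℕ} (h : i % w.length = j % w.length) :
    Qst π w q i = Qst π w q j := by
  have hi : Qst π w q i = Qst π w q (i % w.length) := by
    conv_lhs => rw [show i = i % w.length + (i / w.length) * w.length by
      rw [Nat.mul_comm, Nat.mod_add_div]]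
    rw [Qst_add_mul π w hq]
  have hj : Qst π w q j = Qst π w q (j % w.length) := by
    conv_lhs => rw [show j = j % w.length + (j / w.length) * w.length by
      rw [Nat.mul_comm, Nat.mod_add_div]]
    rw [Qst_add_mul π w hq]
  rw [hi, hj, h]

theorem add_one_mod (p x : ℕ) : (x + 1) % p = (x % p + 1) % p :=
  Nat.ModEq.add_right 1 (Nat.mod_modEq x p).symm

theorem key_step (p u : ℕ) (hp : 0 < p) :
    (p - 1 - u % p) % p = ((p - 1 - (u + 1) % p) + 1) % p := by
  have hr : u % p < p := Nat.mod_lt _ hp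
  have h2 : (u + 1) % p = (u % p + 1) % p := add_one_mod p u
  rcases Nat.lt_or_ge (u % p + 1) p with h | h
  · rw [h2, Nat.mod_eq_of_lt h]
    congr 1
    omega
  · have hp1 : u % p + 1 = p := by omega
    rw [h2, hp1, Nat.mod_self]
    have e1 : p - 1 - u % p = 0 := by omega
    have e2 : p - 1 - 0 + 1 = p := by omega
    rw [e1, e2]
    simp

theorem key_mod (p t k : ℕ) (hp : 0 < p) :
    ∀ a, a ≤ k → (p - 1 - (t + k - a) % p) % p = ((p - 1 - (t + k) % p) + a) % p := by
  intro a
  induction a with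
  | zero => intro _; simp
  | succ a ih =>
    intro ha
    have h1 := ih (by omega)
    have h3 := key_step p (t + k - (a + 1)) hp
    rw [show t + k - (a + 1) + 1 = t + k - a by omega] at h3
    rw [h3, add_one_mod, h1, ← add_one_mod, Nat.add_assoc]

/-- The periodic point associated to a (circuit) word. -/
def pt [NeZero n] (w : List (Fin n)) : ℕ → Fin n :=
  fun t => cyc w (w.length - 1 - t % w.length)

theorem outWord_eq_ofFn [NeZero n] (π : Fin n → Q → Q) (lab : Q → Equiv.Perm (Fin n))
    (w : List (Fin n)) (q : Q) :
    outWord π lab w q = List.ofFn fun a : Fin w.length => lab (Qst π w q ↑a) (cyc w ↑a) := by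
  have h := outWord_ofFn_cyc π lab w q w.length 0
  simp only [Nat.zero_add] at h
  rw [← eq_ofFn_cyc w] at h
  exact h

/-- The fundamental correspondence: the induced map sends the periodic point of a based
circuit `(q, w)` to the periodic point of the output word. -/
theorem inducedMap_pt [NeZero n] (π : Fin n → Q → Q) (k : ℕ) (s : List (Fin n) → Q)
    (lab : Q → Equiv.Perm (Fin n)) (hs : SyncAtLevelWith π k s)
    (w : List (Fin n)) (q : Q) (hw : w ≠ []) (hq : transStar π w q = q) :
    inducedMap k s lab (pt w) = pt (outWord π lab w q) := by
  have hp : 0 < w.length := List.length_pos_iff.mpr hw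
  funext t
  show lab (s (List.ofFn fun j : Fin k => pt w (t + k - ↑j))) (pt w t) = _
  have hv : (List.ofFn fun j : Fin k => pt w (t + k - ↑j))
      = List.ofFn fun a : Fin k => cyc w ((w.length - 1 - (t + k) % w.length) + ↑a) := by
    congr 1
    funext a
    exact cyc_congr w (key_mod w.length t k hp ↑a (le_of_lt a.isLt))
  rw [hv]
  rw [← hs _ (by simp) (Qst π w q (w.length - 1 - (t + k) % w.length))]
  rw [transStar_ofFn_cyc]
  have hQ : Qst π w q ((w.length - 1 - (t + k) % w.length) + k)
      = Qst π w q (w.length - 1 - t % w.length) := by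
    apply Qst_congr π w hq
    have h := key_mod w.length t k hp k le_rfl
    rw [show t + k - k = t by omega] at h
    exact h.symm
  rw [hQ]
  have hmlt : t % w.length < w.length := Nat.mod_lt _ hp
  have hjtlt : w.length - 1 - t % w.length < w.length := by omega
  have hlen2 : (outWord π lab w q).length = w.length := outWord_length π lab w q
  show _ = cyc (outWord π lab w q)
      ((outWord π lab w q).length - 1 - t % (outWord π lab w q).length)
  rw [hlen2]
  rw [cyc_eq_get _ (by rw [hlen2]; exact hjtlt)]
  have hget : (outWord π lab w q)[w.length - 1 - t % w.length]'(by rw [hlen2]; exact hjtlt)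
      = lab (Qst π w q (w.length - 1 - t % w.length)) (cyc w (w.length - 1 - t % w.length)) := by
    simp only [outWord_eq_ofFn π lab w q, List.getElem_ofFn]
  rw [hget]
  rfl

theorem transStar_const {k : ℕ} {s : List (Fin n) → Q} {π : Fin n → Q → Q}
    (hs : SyncAtLevelWith π k s) (u : List (Fin n)) (hu : k ≤ u.length) (q q' : Q) :
    transStar π u q = transStar π u q' := by
  have h := List.take_append_drop (u.length - k) u
  have hd : (u.drop (u.length - k)).length = k := by
    rw [List.length_drop]; omega
  conv_lhs => rw [← h]
  conv_rhs => rw [← h]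
  rw [transStar_append, transStar_append, hs _ hd, hs _ hd]

theorem transStar_join_replicate (π : Fin n → Q → Q) (w : List (Fin n)) :
    ∀ (m : ℕ) (q : Q), transStar π (List.flatten (List.replicate m w)) q
      = (transStar π w)^[m] q := by
  intro m
  induction m with
  | zero => intro q; rfl
  | succ m ih =>
    intro q
    rw [List.replicate_succ, List.flatten_cons, transStar_append, ih,
      Function.iterate_succ_apply]

theorem length_join_replicate (m : ℕ) (w : List (Fin n)) :
    (List.flatten (List.replicate m w)).length = m * w.length := by
  induction m with
  | zero => simp
  | succ m ih =>
    rw [List.replicate_succ, List.flatten_cons, List.length_append, ih]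
    ring

theorem base_unique {k : ℕ} {s : List (Fin n) → Q} {π : Fin n → Q → Q}
    (hs : SyncAtLevelWith π k s) (w : List (Fin n)) (hw : w ≠ []) {q q' : Q}
    (hq : transStar π w q = q) (hq' : transStar π w q' = q') : q = q' := by
  have hp : 0 < w.length := List.length_pos_iff.mpr hw
  have h1 : (transStar π w)^[k] q = q := Function.iterate_fixed hq k
  have h1' : (transStar π w)^[k] q' = q' := Function.iterate_fixed hq' k
  have hlen : k ≤ (List.flatten (List.replicate k w)).length := by
    rw [length_join_replicate]
    exact Nat.le_mul_of_pos_right k hp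
  have h2 := transStar_const hs _ hlen q q'
  rw [transStar_join_replicate, transStar_join_replicate, h1, h1'] at h2
  exact h2

theorem circMap_isCircuit {π : Fin n → Q → Q} (Φ : DigraphAut n π)
    {c : Q × List (Fin n)} (hc : IsBasedCircuit π c) :
    IsBasedCircuit π (circMap Φ c) := by
  obtain ⟨h1, h2⟩ := hc
  constructor
  · apply List.ne_nil_of_length_pos
    rw [show (circMap Φ c).2 = outWord π Φ.lab c.2 c.1 from rfl, outWord_length]
    exact List.length_pos_iff.mpr h1
  · show transStar π (outWord π Φ.lab c.2 c.1) (Φ.α c.1) = Φ.α c.1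
    rw [transStar_outWord, h2]

theorem pt_get [NeZero n] (w : List (Fin n)) (hp : 0 < w.length) {j : ℕ}
    (hj : j < w.length) : pt w (w.length - 1 - j) = w[j] := by
  unfold pt
  rw [Nat.mod_eq_of_lt (show w.length - 1 - j < w.length by omega)]
  rw [show w.length - 1 - (w.length - 1 - j) = j by omega]
  exact cyc_eq_get w hj

theorem pt_inj [NeZero n] {k : ℕ} {s : List (Fin n) → Q} {π : Fin n → Q → Q}
    (hs : SyncAtLevelWith π k s) {c c' : Q × List (Fin n)}
    (hc : IsBasedCircuit π c) (hc' : IsBasedCircuit π c')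
    (hlen : c.2.length = c'.2.length) (hpt : pt c.2 = pt c'.2) : c = c' := by
  obtain ⟨q, w⟩ := c
  obtain ⟨q', w'⟩ := c'
  simp only at hlen hpt
  have hp : 0 < w.length := List.length_pos_iff.mpr hc.1
  have hww : w = w' := by
    apply List.ext_getElem hlen
    intro j hjw hjw'
    rw [← pt_get w hp hjw, ← pt_get w' (by omega) hjw', hlen, hpt]
  subst hww
  have hqq : q = q' := base_unique hs w hc.1 hc.2 hc'.2
  rw [hqq]

theorem circMap_iter_spec {π : Fin n → Q → Q} [NeZero n] (Φ : DigraphAut n π)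
    {k : ℕ} {s : List (Fin n) → Q} {f : (ℕ → Fin n) → (ℕ → Fin n)}
    (hs : SyncAtLevelWith π k s) (hF : inducedMap k s Φ.lab = f)
    {c : Q × List (Fin n)} (hc : IsBasedCircuit π c) :
    ∀ L : ℕ, IsBasedCircuit π ((circMap Φ)^[L] c)
      ∧ ((circMap Φ)^[L] c).2.length = c.2.length
      ∧ f^[L] (pt c.2) = pt (((circMap Φ)^[L] c).2) := by
  intro L
  induction L with
  | zero => exact ⟨hc, rfl, rfl⟩
  | succ L ih =>
    obtain ⟨ih1, ih2, ih3⟩ := ih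
    rw [Function.iterate_succ_apply' (circMap Φ) L c]
    refine ⟨circMap_isCircuit Φ ih1, ?_, ?_⟩
    · rw [show (circMap Φ ((circMap Φ)^[L] c)).2
          = outWord π Φ.lab ((circMap Φ)^[L] c).2 ((circMap Φ)^[L] c).1 from rfl,
        outWord_length, ih2]
    · rw [Function.iterate_succ_apply' f L, ih3, ← hF]
      exact inducedMap_pt π k s Φ.lab hs _ _ ih1.1 ih1.2

theorem periodic_mod {α : Type*} (y : ℕ → α) (P : ℕ) (hP : 0 < P)
    (hper : ∀ t, y (t + P) = y t) : ∀ t, y t = y (t % P) := by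
  intro t
  induction t using Nat.strong_induction_on with
  | _ t ih =>
    rcases Nat.lt_or_ge t P with h | h
    · rw [Nat.mod_eq_of_lt h]
    · have h1 : y t = y (t - P) := by
        rw [← hper (t - P)]; congr 1; omega
      rw [h1, ih (t - P) (by omega)]
      congr 1
      conv_rhs => rw [show t = t - P + P by omega, Nat.add_mod_right]

theorem pt_ofFn [NeZero n] (P : ℕ) (hP : 0 < P) (y : ℕ → Fin n)
    (hper : ∀ t, y (t + P) = y t) :
    pt (List.ofFn fun j : Fin P => y (P - 1 - ↑j)) = y := by
  funext t
  have hm : t % P < P := Nat.mod_lt _ hP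
  show cyc _ ((List.ofFn fun j : Fin P => y (P - 1 - ↑j)).length - 1
      - t % (List.ofFn fun j : Fin P => y (P - 1 - ↑j)).length) = y t
  rw [List.length_ofFn]
  rw [cyc_eq_get _ (by rw [List.length_ofFn]; omega)]
  rw [List.getElem_ofFn]
  show y (P - 1 - (P - 1 - t % P)) = y t
  rw [show P - 1 - (P - 1 - t % P) = t % P by omega]
  exact (periodic_mod y P hP hper t).symm

theorem exists_circuit_pt [NeZero n] [Nonempty Q] (π : Fin n → Q → Q) {k : ℕ}
    {s : List (Fin n) → Q} (hs : SyncAtLevelWith π k s) (P : ℕ) (hP : 0 < P)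
    (y : ℕ → Fin n) (hper : ∀ t, y (t + P) = y t) :
    ∃ c : Q × List (Fin n), IsBasedCircuit π c ∧ pt c.2 = y := by
  set w := List.ofFn (fun j : Fin P => y (P - 1 - ↑j)) with hw
  have hlen : w.length = P := by simp [hw]
  have hwne : w ≠ [] := List.ne_nil_of_length_pos (by omega)
  obtain ⟨a⟩ := ‹Nonempty Q›
  set q := (transStar π w)^[k] a with hqdef
  have hconst : ∀ b : Q, (transStar π w)^[k] b = q := by
    intro b
    rw [hqdef, ← transStar_join_replicate, ← transStar_join_replicate]
    apply transStar_const hs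
    rw [length_join_replicate, hlen]
    exact Nat.le_mul_of_pos_right k hP
  have hfix : transStar π w q = q := by
    calc transStar π w q = transStar π w ((transStar π w)^[k] a) := by rw [hqdef]
    _ = (transStar π w)^[k] (transStar π w a) := by
        rw [← Function.iterate_succ_apply, Function.iterate_succ_apply']
    _ = q := hconst _
  exact ⟨(q, w), ⟨hwne, hfix⟩, by rw [hw]; exact pt_ofFn P hP y hper⟩

theorem inducedMap_local {k : ℕ} {s : List (Fin n) → Q} {lab : Q → Equiv.Perm (Fin n)}
    (x y : ℕ → Fin n) (i : ℕ) (h : ∀ j, j ≤ k → x (i + j) = y (i + j)) :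
    inducedMap k s lab x i = inducedMap k s lab y i := by
  unfold inducedMap
  have h0 : x i = y i := by simpa using h 0 (Nat.zero_le k)
  have hv : (List.ofFn fun j : Fin k => x (i + k - ↑j))
      = List.ofFn fun j : Fin k => y (i + k - ↑j) := by
    congr 1
    funext j
    rw [show i + k - ↑j = i + (k - ↑j) by omega]
    exact h (k - ↑j) (by omega)
  rw [hv, h0]

theorem inducedMap_iter_local {k : ℕ} {s : List (Fin n) → Q}
    {lab : Q → Equiv.Perm (Fin n)} :
    ∀ (L : ℕ) (x y : ℕ → Fin n) (i : ℕ), (∀ j, j ≤ L * k → x (i + j) = y (i + j)) →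
      (inducedMap k s lab)^[L] x i = (inducedMap k s lab)^[L] y i := by
  intro L
  induction L with
  | zero =>
    intro x y i h
    simpa using h 0 (by simp)
  | succ L ih =>
    intro x y i h
    rw [Function.iterate_succ_apply, Function.iterate_succ_apply]
    apply ih
    intro j hj
    apply inducedMap_local
    intro j' hj'
    rw [show i + j + j' = i + (j + j') by omega]
    apply h
    have : (L + 1) * k = L * k + k := by ring
    omega

theorem shift_iter {n : ℕ} : ∀ (t : ℕ) (x : ℕ → Fin n) (a : ℕ),
    (shiftMap n)^[t] x a = x (t + a) := by
  intro t
  induction t with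
  | zero => intro x a; simp
  | succ t ih =>
    intro x a
    rw [Function.iterate_succ_apply, ih (shiftMap n x) a]
    show x (t + a + 1) = x (t + 1 + a)
    congr 1
    omega

end Aux

theorem all_points_orbit_len_iff_all_circuits_orbit_len
    (n N : ℕ) (hn : 2 ≤ n) (hN : 0 < N) (hdvd : N ∣ n)
    (φ : (ℕ → Fin n) ≃ₜ (ℕ → Fin n)) (hφ : IsShiftAut n φ)
    (hfin : FiniteOrderAut n φ)
    (Q : Type) [Fintype Q] [Nonempty Q] (π : Fin n → Q → Q)
    (Φ : DigraphAut n π) (hsupp : IsSupport n π Φ φ) :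
    (∀ x : ℕ → Fin n, HasOrbitLen (⇑φ) x N) ↔
      (∀ c : Q × List (Fin n), IsBasedCircuit π c →
        HasOrbitLen (circMap Φ) c N) := by
  haveI : NeZero n := ⟨by omega⟩
  obtain ⟨k, s, hs, hcore, hF⟩ := hsupp
  constructor
  · -- all points ⇒ all circuits
    intro hall c hc
    have spec := circMap_iter_spec Φ hs hF hc
    constructor
    · refine ⟨hN, ?_⟩
      have h1 : (⇑φ)^[N] (pt c.2) = pt c.2 := (hall (pt c.2)).1.2
      have h2 := (spec N).2.2
      exact pt_inj hs (spec N).1 hc (spec N).2.1 (by rw [← h2, h1])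
    · rintro L ⟨hL, hLe⟩
      have h2 := (spec L).2.2
      rw [hLe] at h2
      exact (hall (pt c.2)).2 ⟨hL, h2⟩
  · -- all circuits ⇒ all points
    intro hall x
    have hNid : ∀ (z : ℕ → Fin n) (i : ℕ), (⇑φ)^[N] z i = z i := by
      intro z i
      set P := i + N * k + 1 with hPdef
      set y : ℕ → Fin n := fun t => z (t % P) with hy
      have hyper : ∀ t, y (t + P) = y t := by
        intro t; simp only [hy, Nat.add_mod_right]
      obtain ⟨c, hc, hpt⟩ := exists_circuit_pt π hs P (by omega) y hyper
      have hcirc : (circMap Φ)^[N] c = c := (hall c hc).1.2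
      have h2 := (circMap_iter_spec Φ hs hF hc N).2.2
      rw [hcirc, hpt] at h2
      have hloc : (⇑φ)^[N] z i = (⇑φ)^[N] y i := by
        rw [← hF]
        apply inducedMap_iter_local
        intro j hj
        simp only [hy]
        rw [Nat.mod_eq_of_lt (by omega)]
      rw [hloc, h2]
      simp only [hy]
      rw [Nat.mod_eq_of_lt (by omega)]
    refine ⟨⟨hN, funext (hNid x)⟩, ?_⟩
    rintro L ⟨hL, hLx⟩
    obtain ⟨u1, u2, hne, heq⟩ := Finite.exists_ne_map_eq_of_infinite
        (fun t : ℕ => (fun a : Fin (L * k + 1) => x (t + ↑a)))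
    have key : ∀ t1 t2 : ℕ, t1 < t2 →
        (∀ a, a ≤ L * k → x (t1 + a) = x (t2 + a)) → N ≤ L := by
      intro t1 t2 hlt hwin
      set p := t2 - t1 with hpdef
      have hp : 0 < p := by omega
      have hstar : ∀ u, u ≤ p - 1 + L * k → x (t1 + u) = x (t1 + u % p) := by
        intro u
        induction u using Nat.strong_induction_on with
        | _ u ih =>
          intro hu
          rcases Nat.lt_or_ge u p with h | h
          · rw [Nat.mod_eq_of_lt h]
          · have h1 : x (t1 + u) = x (t2 + (u - p)) := by congr 1; omega
            have h2 : x (t2 + (u - p)) = x (t1 + (u - p)) :=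
              (hwin (u - p) (by omega)).symm
            rw [h1, h2, ih (u - p) (by omega) (by omega)]
            congr 2
            conv_rhs => rw [show u = u - p + p by omega, Nat.add_mod_right]
      set y : ℕ → Fin n := fun t => x (t1 + t % p) with hy
      have hyper : ∀ t, y (t + p) = y t := by
        intro t; simp only [hy, Nat.add_mod_right]
      obtain ⟨c, hc, hpt⟩ := exists_circuit_pt π hs p hp y hyper
      have hcomm : Function.Commute ⇑φ (shiftMap n) := fun z => congrFun hφ z
      have hfixy : (⇑φ)^[L] y = y := by
        funext t
        have e1 : (⇑φ)^[L] y t = (shiftMap n)^[t] ((⇑φ)^[L] y) 0 := by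
          rw [shift_iter, Nat.add_zero]
        rw [e1, ← (hcomm.iterate_iterate L t) y]
        have hagree : (⇑φ)^[L] ((shiftMap n)^[t] y) 0
            = (⇑φ)^[L] ((shiftMap n)^[t1 + t % p] x) 0 := by
          rw [← hF]
          apply inducedMap_iter_local
          intro j hj
          rw [shift_iter, shift_iter]
          simp only [Nat.zero_add]
          show x (t1 + (t + j) % p) = x (t1 + t % p + j)
          have e2 : (t + j) % p = (t % p + j) % p :=
            Nat.ModEq.add_right j (Nat.mod_modEq t p).symm
          have hmp : t % p < p := Nat.mod_lt _ hp
          rw [e2, ← hstar (t % p + j) (by omega), ← Nat.add_assoc]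
        rw [hagree, (hcomm.iterate_iterate L (t1 + t % p)) x, hLx, shift_iter,
          Nat.add_zero]
      have spec := circMap_iter_spec Φ hs hF hc L
      have hCc : (circMap Φ)^[L] c = c :=
        pt_inj hs spec.1 hc spec.2.1
          (by rw [← spec.2.2, hpt, hfixy])
      exact (hall c hc).2 ⟨hL, hCc⟩
    rcases Nat.lt_or_ge u1 u2 with h | h
    · exact key u1 u2 h (fun a ha => congrFun heq ⟨a, by omega⟩)
    · have h' : u2 < u1 := by
        rcases Nat.lt_or_ge u2 u1 with h2 | h2
        · exact h2
        · exact absurd (Nat.le_antisymm h h2) (fun e => hne e.symm)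
      exact key u2 u1 h' (fun a ha => congrFun heq.symm ⟨a, by omega⟩)
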